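/- Let V be a vector space over a field k with a square-zero endomorphism d and a bilinear alternating bracket ℓ₂ satisfying the Leibniz rule with respect to d. Suppose there exists a trilinear map ℓ₃ : V×V×V → V such that the Jacobiator of ℓ₂ equals d ∘ ℓ₃ + ℓ₃ applied with d in each slot (i.e., J(x,y,z) = d(ℓ₃(x,y,z)) + ℓ₃(dx,y,z) + ℓ₃(x,dy,z) + ℓ₃(x,y,dz)). Then the induced bracket on homology H = ker d / im d satisfies the Jacobi identity, so H is a Lie algebra. -/

import Mathlib

/-!
Cycles are closed under `ℓ₂` and boundaries form an ideal for it in the cycles, both by the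
Leibniz rule, so `ℓ₂` descends to `H = ker d / im d`. On cycles the homotopy formula for the
Jacobiator reduces to `J(x, y, z) = d (ℓ₃ x y z)`, so the Jacobiator vanishes in `H`.
-/

section LeibnizBracket

variable {R M : Type*} [CommRing R] [AddCommGroup M] [Module R M]
  {d : M →ₗ[R] M} {l2 : M →ₗ[R] M →ₗ[R] M}

abbrev homologyOf (d : M →ₗ[R] M) : Type _ :=
  LinearMap.ker d ⧸ (LinearMap.range d).comap (LinearMap.ker d).subtype

def IsLeibniz (d : M →ₗ[R] M) (l2 : M →ₗ[R] M →ₗ[R] M) : Prop :=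
  ∀ x y, d (l2 x y) = l2 (d x) y + l2 x (d y)

namespace IsLeibniz

theorem apply_mem_ker (hleib : IsLeibniz d l2) {x y : M} (hx : x ∈ LinearMap.ker d)
    (hy : y ∈ LinearMap.ker d) : l2 x y ∈ LinearMap.ker d := by
  rw [LinearMap.mem_ker] at *
  simp [hleib x y, hx, hy]

theorem apply_mem_range_left (hleib : IsLeibniz d l2) {b y : M}
    (hb : b ∈ LinearMap.range d) (hy : y ∈ LinearMap.ker d) : l2 b y ∈ LinearMap.range d := by
  obtain ⟨a, rfl⟩ := hb
  exact ⟨l2 a y, by simp [hleib a y, LinearMap.mem_ker.mp hy]⟩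

theorem apply_mem_range_right (hleib : IsLeibniz d l2) {x b : M}
    (hx : x ∈ LinearMap.ker d) (hb : b ∈ LinearMap.range d) : l2 x b ∈ LinearMap.range d := by
  obtain ⟨a, rfl⟩ := hb
  exact ⟨l2 x a, by simp [hleib x a, LinearMap.mem_ker.mp hx]⟩

def cyclesBracket (hleib : IsLeibniz d l2) :
    LinearMap.ker d →ₗ[R] LinearMap.ker d →ₗ[R] LinearMap.ker d :=
  LinearMap.mk₂ R (fun x y => ⟨l2 x y, hleib.apply_mem_ker x.2 y.2⟩)
    (fun _ _ _ => Subtype.ext (by simp)) (fun _ _ _ => Subtype.ext (by simp))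
    (fun _ _ _ => Subtype.ext (by simp)) (fun _ _ _ => Subtype.ext (by simp))

def homologyBracket (hleib : IsLeibniz d l2) :
    homologyOf d →ₗ[R] homologyOf d →ₗ[R] homologyOf d :=
  (hleib.cyclesBracket.compr₂ (Submodule.mkQ _)).liftQ₂ _ _
    (fun _ hs => LinearMap.ext fun y => (Submodule.Quotient.mk_eq_zero _).mpr
      (hleib.apply_mem_range_left hs y.2))
    (fun _ hs => LinearMap.ext fun x => (Submodule.Quotient.mk_eq_zero _).mpr
      (hleib.apply_mem_range_right x.2 hs))

theorem homologyBracket_mk (hleib : IsLeibniz d l2) (x y : LinearMap.ker d) :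
    hleib.homologyBracket (Submodule.Quotient.mk x) (Submodule.Quotient.mk y) =
      Submodule.Quotient.mk ⟨l2 x y, hleib.apply_mem_ker x.2 y.2⟩ :=
  rfl

theorem homologyBracket_self (hleib : IsLeibniz d l2) (halt : ∀ x, l2 x x = 0)
    (u : homologyOf d) : hleib.homologyBracket u u = 0 := by
  induction u using Submodule.Quotient.induction_on with
  | H x =>
    rw [homologyBracket_mk, ← Submodule.Quotient.mk_zero]
    exact congrArg _ (Subtype.ext (halt x))

theorem homologyBracket_jacobi (hleib : IsLeibniz d l2)
    (hjac : ∀ x y z, x ∈ LinearMap.ker d → y ∈ LinearMap.ker d → z ∈ LinearMap.ker d →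
      l2 (l2 x y) z + l2 (l2 y z) x + l2 (l2 z x) y ∈ LinearMap.range d)
    (u v w : homologyOf d) :
    hleib.homologyBracket (hleib.homologyBracket u v) w +
        hleib.homologyBracket (hleib.homologyBracket v w) u +
        hleib.homologyBracket (hleib.homologyBracket w u) v = 0 := by
  induction u using Submodule.Quotient.induction_on with | H x =>
  induction v using Submodule.Quotient.induction_on with | H y =>
  induction w using Submodule.Quotient.induction_on with | H z =>
  simp only [homologyBracket_mk, ← Submodule.Quotient.mk_add, Submodule.Quotient.mk_eq_zero]
  exact hjac x y z x.2 y.2 z.2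

end IsLeibniz

theorem jacobiator_mem_range_of_homotopy {l3 : M →ₗ[R] M →ₗ[R] M →ₗ[R] M}
    (hhty : ∀ x y z, l2 (l2 x y) z + l2 (l2 y z) x + l2 (l2 z x) y =
      d (l3 x y z) + l3 (d x) y z + l3 x (d y) z + l3 x y (d z))
    {x y z : M} (hx : x ∈ LinearMap.ker d) (hy : y ∈ LinearMap.ker d)
    (hz : z ∈ LinearMap.ker d) :
    l2 (l2 x y) z + l2 (l2 y z) x + l2 (l2 z x) y ∈ LinearMap.range d := by
  rw [LinearMap.mem_ker] at hx hy hz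
  exact ⟨l3 x y z, by simp [hhty, hx, hy, hz]⟩

end LeibnizBracket

theorem stmt12_general (k : Type*) [Field k] (V : Type*) [AddCommGroup V] [Module k V]
    (d : V →ₗ[k] V)
    (l2 : V →ₗ[k] V →ₗ[k] V) (halt : ∀ x : V, l2 x x = 0)
    (hchain : ∀ x y : V, d (l2 x y) = l2 (d x) y + l2 x (d y))
    (l3 : V →ₗ[k] V →ₗ[k] V →ₗ[k] V)
    (hhty : ∀ x y z : V,
      l2 (l2 x y) z + l2 (l2 y z) x + l2 (l2 z x) y =
        d (l3 x y z) + l3 (d x) y z + l3 x (d y) z + l3 x y (d z)) :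
    ∃ Br : ((LinearMap.ker d) ⧸ (LinearMap.range d).comap (LinearMap.ker d).subtype) →ₗ[k]
        ((LinearMap.ker d) ⧸ (LinearMap.range d).comap (LinearMap.ker d).subtype) →ₗ[k]
        ((LinearMap.ker d) ⧸ (LinearMap.range d).comap (LinearMap.ker d).subtype),
      (∀ (x y : LinearMap.ker d) (hxy : l2 (x : V) (y : V) ∈ LinearMap.ker d),
        Br (Submodule.Quotient.mk x) (Submodule.Quotient.mk y) =
          Submodule.Quotient.mk ⟨l2 (x : V) (y : V), hxy⟩) ∧
      (∀ u, Br u u = 0) ∧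
      (∀ u v w, Br (Br u v) w + Br (Br v w) u + Br (Br w u) v = 0) := by
  have hleib : IsLeibniz d l2 := hchain
  exact ⟨hleib.homologyBracket, fun x y _ => hleib.homologyBracket_mk x y,
    hleib.homologyBracket_self halt,
    hleib.homologyBracket_jacobi fun _ _ _ => jacobiator_mem_range_of_homotopy hhty⟩

/-- If the Jacobiator of `ℓ₂` is a homotopy boundary via `ℓ₃`, then the bracket
induced on homology `ker d / im d` is alternating and satisfies the Jacobi
identity, so homology is a Lie algebra. -/
theorem stmt12 (k : Type*) [Field k] (V : Type*) [AddCommGroup V] [Module k V]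
    (d : V →ₗ[k] V) (hd : d ∘ₗ d = 0)
    (l2 : V →ₗ[k] V →ₗ[k] V) (halt : ∀ x : V, l2 x x = 0)
    (hchain : ∀ x y : V, d (l2 x y) = l2 (d x) y + l2 x (d y))
    (l3 : V →ₗ[k] V →ₗ[k] V →ₗ[k] V)
    (hhty : ∀ x y z : V,
      l2 (l2 x y) z + l2 (l2 y z) x + l2 (l2 z x) y =
        d (l3 x y z) + l3 (d x) y z + l3 x (d y) z + l3 x y (d z)) :
    ∃ Br : ((LinearMap.ker d) ⧸ (LinearMap.range d).comap (LinearMap.ker d).subtype) →ₗ[k]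
        ((LinearMap.ker d) ⧸ (LinearMap.range d).comap (LinearMap.ker d).subtype) →ₗ[k]
        ((LinearMap.ker d) ⧸ (LinearMap.range d).comap (LinearMap.ker d).subtype),
      (∀ (x y : LinearMap.ker d) (hxy : l2 (x : V) (y : V) ∈ LinearMap.ker d),
        Br (Submodule.Quotient.mk x) (Submodule.Quotient.mk y) =
          Submodule.Quotient.mk ⟨l2 (x : V) (y : V), hxy⟩) ∧
      (∀ u, Br u u = 0) ∧
      (∀ u v w, Br (Br u v) w + Br (Br v w) u + Br (Br w u) v = 0) :=
  stmt12_general k V d l2 halt hchain l3 hhty
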